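/- arXiv:0711.3049 — 2 statements merged into one kernel-verified Lean document; each statement's English description precedes it below -/
import Mathlib

section
/- (Northeast Lemma) Let G be a graph on n vertices and suppose A is a real symmetric matrix in S(G) with π(A) = p and ν(A) = q. Then for every pair of nonnegative integers r ≥ p and s ≥ q with r + s ≤ n, there exists a real symmetric matrix B in S(G) with π(B) = r and ν(B) = s. -/
open Matrix

/-- Number of positive eigenvalues (with multiplicity) of a real symmetric matrix. -/
noncomputable def posIn {m : ℕ} {A : Matrix (Fin m) (Fin m) ℝ} (hA : A.IsHermitian) : ℕ :=
  Finset.card (Finset.univ.filter fun i => 0 < hA.eigenvalues i)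

/-- Number of negative eigenvalues (with multiplicity) of a real symmetric matrix. -/
noncomputable def negIn {m : ℕ} {A : Matrix (Fin m) (Fin m) ℝ} (hA : A.IsHermitian) : ℕ :=
  Finset.card (Finset.univ.filter fun i => hA.eigenvalues i < 0)

/-- `A` has partial inertia `(r, s)`. -/
def HasInertia {m : ℕ} (A : Matrix (Fin m) (Fin m) ℝ) (r s : ℕ) : Prop :=
  ∃ hA : A.IsHermitian, posIn hA = r ∧ negIn hA = s

/-- `A` is a real symmetric matrix whose off-diagonal zero–nonzero pattern is
given by the edges of the graph `G`. -/
def SMat {m : ℕ} (G : SimpleGraph (Fin m)) (A : Matrix (Fin m) (Fin m) ℝ) : Prop :=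
  A.IsSymm ∧ ∀ i j : Fin m, i ≠ j → (A i j ≠ 0 ↔ G.Adj i j)

/-! The inertia is read off variationally: `π(A)` is the largest dimension of a subspace on which
`x ↦ xᵀ A x` is positive definite, and `ν(A) = π(-A)`. If `π(A) + ν(A) < n`, then `A` has a kernel
vector `v`, with some coordinate `vᵢ ≠ 0`. Adding `ε > 0` to the diagonal entry `(i, i)` keeps the
off-diagonal pattern and raises `π` by exactly one while fixing `ν`: the positive subspace of `A`
extended by `v` is positive for the new matrix; a positive subspace of the new matrix meets
`xᵢ = 0` in a positive subspace of `A` of codimension at most one; and projecting along `v` onto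
`xᵢ = 0` carries negative subspaces of `A` to negative subspaces of the new matrix. Adding `ε < 0`
is the same argument for `-A`, and iterating reaches every `(r, s)` northeast of `(p, q)`. -/

open Module Submodule
open scoped Finset

theorem Submodule.finrank_le_finrank_inf_ker_add_one {K V : Type*} [Field K] [AddCommGroup V]
    [Module K V] [FiniteDimensional K V] (W : Submodule K V) (f : Module.Dual K V) :
    finrank K W ≤ finrank K ↥(W ⊓ LinearMap.ker f) + 1 := by
  have hsup_inf := finrank_sup_add_finrank_inf_eq W (LinearMap.ker f)
  have hrank_nullity := LinearMap.finrank_range_add_finrank_ker f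
  have hrange : finrank K (LinearMap.range f) ≤ 1 := (Submodule.finrank_le _).trans (by simp)
  have hsup := Submodule.finrank_le (W ⊔ LinearMap.ker f)
  omega

namespace OrthonormalBasis

variable {ι : Type*} [Fintype ι] (b : OrthonormalBasis ι ℝ (EuclideanSpace ℝ ι))

lemma repr_eq_zero_of_mem_span_image {S : Set ι} {x : EuclideanSpace ℝ ι}
    (hx : x ∈ span ℝ (b '' S)) {j : ι} (hj : j ∉ S) : b.repr x j = 0 := by
  rw [← b.coe_toBasis] at hx
  rw [← b.coe_toBasis_repr_apply]
  by_contra h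
  exact hj (b.toBasis.repr_support_subset_of_mem_span S hx (Finsupp.mem_support_iff.mpr h))

lemma finrank_span_image (S : Finset ι) : finrank ℝ (span ℝ (b '' S)) = S.card := by
  have hli : LinearIndependent ℝ (fun k : S => b k) :=
    b.orthonormal.linearIndependent.comp _ Subtype.val_injective
  rw [Set.image_eq_range]
  exact (finrank_span_eq_card hli).trans (Fintype.card_coe S)

end OrthonormalBasis

namespace Matrix

variable {ι : Type*} [Fintype ι]

def quadForm (A : Matrix ι ι ℝ) (x : EuclideanSpace ℝ ι) : ℝ := ⇑x ⬝ᵥ A *ᵥ ⇑x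

def IsPosDefOn (A : Matrix ι ι ℝ) (W : Submodule ℝ (EuclideanSpace ℝ ι)) : Prop :=
  ∀ x ∈ W, x ≠ 0 → 0 < A.quadForm x

section quadForm

variable (A : Matrix ι ι ℝ) (x : EuclideanSpace ℝ ι)

@[simp]
lemma quadForm_zero : A.quadForm 0 = 0 := by
  simp [quadForm]

@[simp]
lemma quadForm_neg : (-A).quadForm x = -A.quadForm x := by
  simp [quadForm, neg_mulVec]

lemma quadForm_smul (c : ℝ) : A.quadForm (c • x) = c ^ 2 * A.quadForm x := by
  simp only [quadForm, WithLp.ofLp_smul, mulVec_smul, dotProduct_smul, smul_dotProduct, smul_eq_mul]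
  ring

lemma quadForm_add_single [DecidableEq ι] (i : ι) (ε : ℝ) :
    (A + single i i ε).quadForm x = A.quadForm x + ε * x i ^ 2 := by
  simp only [quadForm, add_mulVec, dotProduct_add, single_mulVec_eq, dotProduct_smul,
    dotProduct_single, smul_eq_mul, mul_one]
  ring

lemma quadForm_eq_sum_mul_sq (b : OrthonormalBasis ι ℝ (EuclideanSpace ℝ ι)) {μ : ι → ℝ}
    (hb : ∀ j, A *ᵥ ⇑(b j) = μ j • ⇑(b j)) : A.quadForm x = ∑ j, μ j * b.repr x j ^ 2 := by
  have hx : ⇑x = ∑ j, b.repr x j • ⇑(b j) := by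
    conv_lhs => rw [← b.sum_repr x]
    simp
  have hrepr : ∀ j, ⇑x ⬝ᵥ ⇑(b j) = b.repr x j := by
    intro j
    rw [b.repr_apply_apply, EuclideanSpace.inner_eq_star_dotProduct]
    simp
  conv_lhs => rw [quadForm]; arg 2; rw [hx]
  simp only [mulVec_sum, mulVec_smul, hb, dotProduct_sum, dotProduct_smul, hrepr, smul_eq_mul]
  congr 1; ext j; ring

end quadForm

lemma quadForm_add_of_mulVec_eq_zero {A : Matrix ι ι ℝ} (hA : A.IsHermitian)
    (x : EuclideanSpace ℝ ι) {v : EuclideanSpace ℝ ι} (hv : A *ᵥ ⇑v = 0) :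
    A.quadForm (x + v) = A.quadForm x := by
  have hvA : ⇑v ᵥ* A = 0 := by
    rw [← mulVec_transpose, ← conjTranspose_eq_transpose_of_trivial, hA.eq, hv]
  simp only [quadForm, WithLp.ofLp_add, mulVec_add, hv, add_dotProduct, dotProduct_mulVec ⇑v, hvA,
    zero_dotProduct, add_zero]

section IsPosDefOn

variable {A B : Matrix ι ι ℝ} {W : Submodule ℝ (EuclideanSpace ℝ ι)}

lemma IsPosDefOn.mono (hW : A.IsPosDefOn W) (hAB : ∀ x, A.quadForm x ≤ B.quadForm x) :
    B.IsPosDefOn W :=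
  fun x hx hx0 => (hW x hx hx0).trans_le (hAB x)

lemma IsPosDefOn.inf_ker (hW : B.IsPosDefOn W) {f : Module.Dual ℝ (EuclideanSpace ℝ ι)}
    (hf : ∀ x, f x = 0 → B.quadForm x = A.quadForm x) : A.IsPosDefOn (W ⊓ LinearMap.ker f) :=
  fun x hx hx0 => hf x hx.2 ▸ hW x hx.1 hx0

lemma IsPosDefOn.map (hW : A.IsPosDefOn W) (T : EuclideanSpace ℝ ι →ₗ[ℝ] EuclideanSpace ℝ ι)
    (hT : ∀ x ∈ W, B.quadForm (T x) = A.quadForm x) :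
    B.IsPosDefOn (W.map T) ∧ finrank ℝ (W.map T) = finrank ℝ W := by
  refine ⟨?_, ?_⟩
  · rintro _ ⟨x, hx, rfl⟩ hx0
    rw [hT x hx]
    exact hW x hx (by rintro rfl; simp at hx0)
  · have hinj : Function.Injective (T.domRestrict W) := by
      rw [← LinearMap.ker_eq_bot, LinearMap.ker_eq_bot']
      rintro ⟨x, hx⟩ hTx
      replace hTx : T x = 0 := hTx
      by_contra hx0
      have := hT x hx
      rw [hTx, quadForm_zero] at this
      exact (hW x hx (by simpa using hx0)).ne this
    rw [← LinearMap.range_domRestrict, LinearMap.finrank_range_of_inj hinj]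

lemma IsPosDefOn.sup_span_singleton (hA : A.IsHermitian) (hW : A.IsPosDefOn W)
    {v : EuclideanSpace ℝ ι} (hv : A *ᵥ ⇑v = 0) (hAB : ∀ x, A.quadForm x ≤ B.quadForm x)
    (hBv : 0 < B.quadForm v) :
    B.IsPosDefOn (W ⊔ span ℝ {v}) ∧ finrank ℝ ↥(W ⊔ span ℝ {v}) = finrank ℝ W + 1 := by
  refine ⟨?_, finrank_sup_span_singleton fun hvW => ?_⟩
  · intro y hy hy0
    obtain ⟨w, hw, z, hz, rfl⟩ := mem_sup.mp hy
    obtain ⟨t, rfl⟩ := mem_span_singleton.mp hz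
    by_cases hw0 : w = 0
    · subst hw0
      have ht : t ≠ 0 := by rintro rfl; simp at hy0
      rw [zero_add, quadForm_smul]
      positivity
    · have htv : A *ᵥ ⇑(t • v) = 0 := by simp [mulVec_smul, hv]
      calc 0 < A.quadForm w := hW w hw hw0
        _ = A.quadForm (w + t • v) := (quadForm_add_of_mulVec_eq_zero hA w htv).symm
        _ ≤ B.quadForm (w + t • v) := hAB _
  · have hv0 : v ≠ 0 := by rintro rfl; simp at hBv
    exact (hW v hvW hv0).ne' (by simp [quadForm, hv])

end IsPosDefOn

section Eigenbasis

variable {A : Matrix ι ι ℝ} {b : OrthonormalBasis ι ℝ (EuclideanSpace ℝ ι)} {μ : ι → ℝ}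

lemma isPosDefOn_span_eigenvectors (hb : ∀ j, A *ᵥ ⇑(b j) = μ j • ⇑(b j)) :
    A.IsPosDefOn (span ℝ (b '' ↑({j | 0 < μ j} : Finset ι))) := by
  intro x hx hx0
  have hsupp : ∀ j, ¬ 0 < μ j → b.repr x j = 0 :=
    fun j hj => b.repr_eq_zero_of_mem_span_image hx (by simpa using hj)
  obtain ⟨j, hj⟩ : ∃ j, b.repr x j ≠ 0 := by
    by_contra! h
    exact hx0 (b.repr.injective (by ext j; simpa using h j))
  rw [A.quadForm_eq_sum_mul_sq x b hb]
  refine Finset.sum_pos' (fun k _ => ?_) ⟨j, Finset.mem_univ _, ?_⟩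
  · by_cases hk : 0 < μ k
    · positivity
    · simp [hsupp k hk]
  · have : 0 < μ j := by_contra fun h => hj (hsupp j h)
    positivity

lemma IsPosDefOn.finrank_le_card (hb : ∀ j, A *ᵥ ⇑(b j) = μ j • ⇑(b j))
    {W : Submodule ℝ (EuclideanSpace ℝ ι)} (hW : A.IsPosDefOn W) :
    finrank ℝ W ≤ #{j | 0 < μ j} := by
  have hdisj : Disjoint W (span ℝ (b '' ↑({j | ¬ 0 < μ j} : Finset ι))) := by
    rw [Submodule.disjoint_def]
    intro x hxW hxN
    by_contra hx0
    have hpos := hW x hxW hx0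
    rw [A.quadForm_eq_sum_mul_sq x b hb] at hpos
    refine hpos.not_ge (Finset.sum_nonpos fun j _ => ?_)
    by_cases hj : 0 < μ j
    · simp [b.repr_eq_zero_of_mem_span_image hxN (by simpa using hj)]
    · exact mul_nonpos_of_nonpos_of_nonneg (not_lt.mp hj) (sq_nonneg _)
  have hdim := Submodule.finrank_add_finrank_le_of_disjoint hdisj
  rw [b.finrank_span_image, finrank_euclideanSpace] at hdim
  have hcard := Finset.card_filter_add_card_filter_not (s := Finset.univ) (fun j => 0 < μ j)
  rw [Finset.card_univ] at hcard
  omega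

end Eigenbasis

end Matrix

section Inertia

variable {m : ℕ} {A : Matrix (Fin m) (Fin m) ℝ}

lemma Matrix.IsHermitian.neg_mulVec_eigenvectorBasis (hA : A.IsHermitian) (j : Fin m) :
    (-A) *ᵥ ⇑(hA.eigenvectorBasis j) = (-hA.eigenvalues j) • ⇑(hA.eigenvectorBasis j) := by
  rw [neg_mulVec, hA.mulVec_eigenvectorBasis, neg_smul]

lemma exists_isPosDefOn_finrank_eq_posIn (hA : A.IsHermitian) :
    ∃ W, A.IsPosDefOn W ∧ finrank ℝ W = posIn hA :=
  ⟨_, Matrix.isPosDefOn_span_eigenvectors hA.mulVec_eigenvectorBasis,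
    hA.eigenvectorBasis.finrank_span_image _⟩

lemma exists_isPosDefOn_neg_finrank_eq_negIn (hA : A.IsHermitian) :
    ∃ W, (-A).IsPosDefOn W ∧ finrank ℝ W = negIn hA := by
  refine ⟨_, Matrix.isPosDefOn_span_eigenvectors hA.neg_mulVec_eigenvectorBasis, ?_⟩
  simp only [OrthonormalBasis.finrank_span_image, neg_pos, negIn]

lemma Matrix.IsPosDefOn.finrank_le_posIn (hA : A.IsHermitian)
    {W : Submodule ℝ (EuclideanSpace ℝ (Fin m))} (hW : A.IsPosDefOn W) :
    finrank ℝ W ≤ posIn hA :=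
  hW.finrank_le_card hA.mulVec_eigenvectorBasis

lemma Matrix.IsPosDefOn.finrank_le_negIn (hA : A.IsHermitian)
    {W : Submodule ℝ (EuclideanSpace ℝ (Fin m))} (hW : (-A).IsPosDefOn W) :
    finrank ℝ W ≤ negIn hA := by
  simpa only [neg_pos, negIn] using hW.finrank_le_card hA.neg_mulVec_eigenvectorBasis

lemma posIn_neg (hA : A.IsHermitian) (hA' : (-A).IsHermitian) : posIn hA' = negIn hA := by
  obtain ⟨W, hW, hWdim⟩ := exists_isPosDefOn_finrank_eq_posIn hA'
  obtain ⟨W', hW', hW'dim⟩ := exists_isPosDefOn_neg_finrank_eq_negIn hA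
  exact le_antisymm (hWdim ▸ hW.finrank_le_negIn hA) (hW'dim ▸ hW'.finrank_le_posIn hA')

lemma negIn_neg (hA : A.IsHermitian) (hA' : (-A).IsHermitian) : negIn hA' = posIn hA := by
  obtain ⟨W, hW, hWdim⟩ := exists_isPosDefOn_neg_finrank_eq_negIn hA'
  obtain ⟨W', hW', hW'dim⟩ := exists_isPosDefOn_finrank_eq_posIn hA
  rw [neg_neg] at hW
  rw [← neg_neg A] at hW'
  exact le_antisymm (hWdim ▸ hW.finrank_le_posIn hA) (hW'dim ▸ hW'.finrank_le_negIn hA')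

lemma HasInertia.neg {r s : ℕ} (h : HasInertia A r s) : HasInertia (-A) s r := by
  obtain ⟨hA, rfl, rfl⟩ := h
  exact ⟨hA.neg, posIn_neg hA hA.neg, negIn_neg hA hA.neg⟩

lemma exists_mulVec_eq_zero_apply_ne_zero (hA : A.IsHermitian) (h : posIn hA + negIn hA < m) :
    ∃ v : EuclideanSpace ℝ (Fin m), A *ᵥ ⇑v = 0 ∧ ∃ i, v i ≠ 0 := by
  obtain ⟨j, hj⟩ : ∃ j, hA.eigenvalues j = 0 := by
    by_contra! h0
    have hnonpos : (Finset.univ.filter fun j => ¬ 0 < hA.eigenvalues j) =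
        Finset.univ.filter fun j => hA.eigenvalues j < 0 :=
      Finset.filter_congr fun j _ =>
        ⟨fun h => lt_of_le_of_ne (not_lt.mp h) (h0 j), fun h => h.asymm⟩
    have hcard := Finset.card_filter_add_card_filter_not (s := Finset.univ)
      (fun j => 0 < hA.eigenvalues j)
    rw [hnonpos, Finset.card_univ, Fintype.card_fin] at hcard
    exact h.ne hcard
  refine ⟨hA.eigenvectorBasis j, by rw [hA.mulVec_eigenvectorBasis, hj, zero_smul], ?_⟩
  by_contra! h
  exact hA.eigenvectorBasis.orthonormal.ne_zero j (by ext i; exact h i)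

lemma exists_linearMap_apply_eq_zero_quadForm_eq (hA : A.IsHermitian)
    {v : EuclideanSpace ℝ (Fin m)} (hv : A *ᵥ ⇑v = 0) {i : Fin m} (hvi : v i ≠ 0) :
    ∃ T : EuclideanSpace ℝ (Fin m) →ₗ[ℝ] EuclideanSpace ℝ (Fin m),
      ∀ x, T x i = 0 ∧ A.quadForm (T x) = A.quadForm x := by
  refine ⟨LinearMap.id - (v i)⁻¹ • (EuclideanSpace.projₗ i).smulRight v, fun x => ⟨?_, ?_⟩⟩
  · simp [field]
  · have hcv : A *ᵥ ⇑((-(v i)⁻¹ * x i) • v) = 0 := by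
      rw [WithLp.ofLp_smul, mulVec_smul, hv, smul_zero]
    convert quadForm_add_of_mulVec_eq_zero hA x hcv using 2
    simp [sub_eq_add_neg, smul_smul]

theorem hasInertia_add_single (hA : A.IsHermitian) {v : EuclideanSpace ℝ (Fin m)}
    (hv : A *ᵥ ⇑v = 0) {i : Fin m} (hvi : v i ≠ 0) {ε : ℝ} (hε : 0 < ε) :
    HasInertia (A + single i i ε) (posIn hA + 1) (negIn hA) := by
  set B := A + single i i ε
  have hB : B.IsHermitian := hA.add (by simp [IsHermitian])
  have hAB : ∀ x, A.quadForm x ≤ B.quadForm x := fun x => by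
    rw [quadForm_add_single]; nlinarith [sq_nonneg (x i)]
  have hf : ∀ x, EuclideanSpace.projₗ i x = 0 → B.quadForm x = A.quadForm x := fun x hx => by
    rw [quadForm_add_single, show x i = 0 from hx]
    ring
  obtain ⟨T, hT⟩ := exists_linearMap_apply_eq_zero_quadForm_eq hA hv hvi
  refine ⟨hB, le_antisymm ?_ ?_, le_antisymm ?_ ?_⟩
  · obtain ⟨W, hW, hWdim⟩ := exists_isPosDefOn_finrank_eq_posIn hB
    have := (hW.inf_ker hf).finrank_le_posIn hA
    have := W.finrank_le_finrank_inf_ker_add_one (EuclideanSpace.projₗ i)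
    omega
  · obtain ⟨W, hW, hWdim⟩ := exists_isPosDefOn_finrank_eq_posIn hA
    obtain ⟨hW', hW'dim⟩ := hW.sup_span_singleton hA hv hAB
      (by rw [quadForm_add_single, quadForm, hv, dotProduct_zero, zero_add]; positivity)
    have := hW'.finrank_le_posIn hB
    omega
  · obtain ⟨W, hW, hWdim⟩ := exists_isPosDefOn_neg_finrank_eq_negIn hB
    exact hWdim ▸ (hW.mono fun x => by simpa using hAB x).finrank_le_negIn hA
  · obtain ⟨W, hW, hWdim⟩ := exists_isPosDefOn_neg_finrank_eq_negIn hA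
    obtain ⟨hW', hW'dim⟩ := hW.map (B := -B) T fun x _ => by simp [hf _ (hT x).1, (hT x).2]
    exact hWdim ▸ hW'dim ▸ hW'.finrank_le_negIn hB

theorem hasInertia_add_single_of_neg (hA : A.IsHermitian) {v : EuclideanSpace ℝ (Fin m)}
    (hv : A *ᵥ ⇑v = 0) {i : Fin m} (hvi : v i ≠ 0) {ε : ℝ} (hε : ε < 0) :
    HasInertia (A + single i i ε) (posIn hA) (negIn hA + 1) := by
  have hv' : (-A) *ᵥ ⇑v = 0 := by rw [neg_mulVec, hv, neg_zero]
  have h := (hasInertia_add_single hA.neg hv' hvi (neg_pos.mpr hε)).neg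
  rwa [neg_add, neg_neg, single_neg, neg_neg, posIn_neg, negIn_neg] at h

end Inertia

section Graph

variable {m : ℕ} {G : SimpleGraph (Fin m)} {A : Matrix (Fin m) (Fin m) ℝ}

lemma SMat.add_single (hA : SMat G A) (i : Fin m) (ε : ℝ) : SMat G (A + single i i ε) := by
  refine ⟨by rw [IsSymm, transpose_add, hA.1, transpose_single], fun j k hjk => ?_⟩
  have hdiag : ¬(i = j ∧ i = k) := fun h => hjk (h.1.symm.trans h.2)
  simpa [single_apply_of_ne _ _ _ _ _ hdiag] using hA.2 j k hjk

lemma SMat.exists_hasInertia_succ_left (hA : SMat G A) {p q : ℕ} (h : HasInertia A p q)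
    (hpq : p + q < m) : ∃ B, SMat G B ∧ HasInertia B (p + 1) q := by
  obtain ⟨hA', rfl, rfl⟩ := h
  obtain ⟨v, hv, i, hvi⟩ := exists_mulVec_eq_zero_apply_ne_zero hA' hpq
  exact ⟨_, hA.add_single i 1, hasInertia_add_single hA' hv hvi one_pos⟩

lemma SMat.exists_hasInertia_succ_right (hA : SMat G A) {p q : ℕ} (h : HasInertia A p q)
    (hpq : p + q < m) : ∃ B, SMat G B ∧ HasInertia B p (q + 1) := by
  obtain ⟨hA', rfl, rfl⟩ := h
  obtain ⟨v, hv, i, hvi⟩ := exists_mulVec_eq_zero_apply_ne_zero hA' hpq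
  exact ⟨_, hA.add_single i (-1), hasInertia_add_single_of_neg hA' hv hvi neg_one_lt_zero⟩

end Graph

/-- Northeast Lemma: any partial inertia northeast of an attained one (within
rank at most n) is attained in S(G). -/
theorem stmt3 {n : ℕ} (G : SimpleGraph (Fin n)) (A : Matrix (Fin n) (Fin n) ℝ)
    (hA : SMat G A) (p q : ℕ) (hpq : HasInertia A p q) :
    ∀ r s : ℕ, p ≤ r → q ≤ s → r + s ≤ n →
      ∃ B : Matrix (Fin n) (Fin n) ℝ, SMat G B ∧ HasInertia B r s := by
  intro r s hr hs hrs
  obtain ⟨B, hB, hBr⟩ : ∃ B, SMat G B ∧ HasInertia B r q := by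
    induction r, hr using Nat.le_induction with
    | base => exact ⟨A, hA, hpq⟩
    | succ r _ ih =>
      obtain ⟨B, hB, hBr⟩ := ih (by omega)
      exact hB.exists_hasInertia_succ_left hBr (by omega)
  induction s, hs using Nat.le_induction with
  | base => exact ⟨B, hB, hBr⟩
  | succ s _ ih =>
    obtain ⟨C, hC, hCs⟩ := ih (by omega)
    exact hC.exists_hasInertia_succ_right hCs (by omega)
end

section
/- Let G be a graph on n vertices and let ℓ be the number of connected components of G. Then the minimum rank over positive semidefinite matrices in S(G) equals n − ℓ if and only if G is a forest. -/
open Matrix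

/-- Minimum rank over positive semidefinite matrices in S(G). -/
noncomputable def mrPlus {n : ℕ} (G : SimpleGraph (Fin n)) : ℕ :=
  sInf {r | ∃ A : Matrix (Fin n) (Fin n) ℝ, SMat G A ∧ A.PosSemidef ∧ A.rank = r}

/-!
The Laplacian of `G` lies in S(G), is positive semidefinite and has rank `n - ℓ`, so always
`mr₊(G) ≤ n - ℓ`.

If `G` is a forest, a positive semidefinite `A ∈ S(G)` is the Gram matrix of vectors `b i` with
`⟪b i, b j⟫ ≠ 0` exactly on the edges. Let `v` be a leaf with neighbour `u`. Every `b j` other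
than `b u` is already orthogonal to `b v`, so projecting all vectors orthogonally to `b v` keeps
the inner products among the `b j`, `j ≠ v`: this is such a representation of `G - v`, and its
span misses `b v`. Induction on `n` gives `rank A ≥ n - ℓ`.

If `G` has a cycle, let `pr` be one of its edges. The Laplacian `L₀` of `G - pr` has the components
of `G`, so `e_p - e_r ⊥ ker L₀` and `e_p - e_r = L₀ x` for some `x`. Wedderburn's rank-one
reduction `L₀ - (xᵀL₀x)⁻¹ (L₀x)(L₀x)ᵀ` stays positive semidefinite, drops the rank by one, and
changes the off-diagonal pattern only at `pr`, where the entry becomes nonzero.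
-/

open SimpleGraph Module Submodule Set
open scoped RealInnerProductSpace

namespace SimpleGraph

section

variable {V : Type*} {G : SimpleGraph V}

theorem IsAcyclic.exists_existsUnique_adj [Finite V] (hG : G.IsAcyclic) (hne : G ≠ ⊥) :
    ∃ v, ∃! u, G.Adj v u := by
  obtain ⟨x, y, hxy⟩ : ∃ x y, G.Adj x y := by simpa [eq_bot_iff_forall_not_adj] using hne
  have : Nonempty V := ⟨x⟩
  obtain ⟨v, w, p, hp, hmax⟩ := Walk.exists_isPath_forall_isPath_length_le_length G
  have hnil : ¬p.Nil := fun h => by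
    simpa [h.length_eq_zero] using hmax x y hxy.toWalk (by simp [hxy.ne])
  refine ⟨v, p.snd, p.adj_snd hnil, fun u hvu => ?_⟩
  by_cases hu : u ∈ p.support
  · exact hG.eq_snd_of_adj_start hp hvu hu
  · simpa using hmax u w (p.cons hvu.symm) (hp.cons hu)

theorem card_connectedComponent_bot :
    Nat.card (⊥ : SimpleGraph V).ConnectedComponent = Nat.card V :=
  (Nat.card_eq_of_bijective _ ⟨fun _ _ h => reachable_bot.mp (ConnectedComponent.eq.mp h),
    ConnectedComponent.ind fun v => ⟨v, rfl⟩⟩).symm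

theorem card_connectedComponent_induce_le [Finite V] {s : Set V}
    (hs : ∀ v ∉ s, (G.neighborSet v).Subsingleton) :
    Nat.card (G.induce s).ConnectedComponent ≤ Nat.card G.ConnectedComponent := by
  refine Nat.card_le_card_of_injective (ConnectedComponent.map (Embedding.induce s).toHom) ?_
  refine ConnectedComponent.ind₂ fun ⟨u, hu⟩ ⟨v, hv⟩ h => ?_
  obtain ⟨p, hp⟩ := (ConnectedComponent.eq.mp h).exists_isPath
  refine ConnectedComponent.eq.mpr ⟨(p.induce s fun w hw => ?_).copy rfl rfl⟩
  by_contra hws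
  exact hp.isTrail.not_mem_support_of_subsingleton_neighborSet (by rintro rfl; exact hws hu)
    (by rintro rfl; exact hws hv) (hs _ hws) hw

end

section

variable {ι E : Type*} [NormedAddCommGroup E] [InnerProductSpace ℝ E]

def IsFaithfulOrthogonalRep (G : SimpleGraph ι) (b : ι → E) : Prop :=
  ∀ i j, i ≠ j → (⟪b i, b j⟫ ≠ 0 ↔ G.Adj i j)

theorem _root_.Submodule.inner_starProjection_starProjection_of_mem_right (K : Submodule ℝ E)
    [K.HasOrthogonalProjection] (x : E) {y : E} (hy : y ∈ K) :
    ⟪K.starProjection x, K.starProjection y⟫ = ⟪x, y⟫ := by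
  rw [starProjection_eq_self_iff.mpr hy, inner_starProjection_left_eq_right,
    starProjection_eq_self_iff.mpr hy]

variable [Finite ι] {G : SimpleGraph ι} {b : ι → E}

theorem IsFaithfulOrthogonalRep.exists_induce_compl_singleton (hb : G.IsFaithfulOrthogonalRep b)
    {v : ι} (hv : ∃! u, G.Adj v u) :
    ∃ b' : ({v}ᶜ : Set ι) → E, (G.induce {v}ᶜ).IsFaithfulOrthogonalRep b' ∧
      finrank ℝ (span ℝ (range b')) < finrank ℝ (span ℝ (range b)) := by
  obtain ⟨u, hvu, hu⟩ := hv
  set K := (ℝ ∙ b v)ᗮ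
  have hbv : b v ≠ 0 := fun h => (hb v u hvu.ne).mpr hvu (by simp [h])
  have hmem : ∀ j, j ≠ v → j ≠ u → b j ∈ K := fun j hjv hju => by
    rw [mem_orthogonal_singleton_iff_inner_right]
    by_contra h
    exact hju (hu j ((hb v j (Ne.symm hjv)).mp h))
  refine ⟨fun j => K.starProjection (b j), fun i j hij => ?_, ?_⟩
  · have hij' : (i : ι) ≠ j := fun h => hij (Subtype.ext h)
    rw [comap_adj, Function.Embedding.coe_subtype, ← hb i j hij']
    by_cases hju : (j : ι) = u
    · have hiu : (i : ι) ≠ u := hju ▸ hij'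
      rw [real_inner_comm, K.inner_starProjection_starProjection_of_mem_right _ (hmem i i.2 hiu),
        real_inner_comm]
    · rw [K.inner_starProjection_starProjection_of_mem_right _ (hmem j j.2 hju)]
  · have hle : span ℝ (range fun j : ({v}ᶜ : Set ι) => K.starProjection (b j)) ≤
        span ℝ (range b) := by
      rw [span_le]
      rintro _ ⟨j, rfl⟩
      change (ℝ ∙ b v)ᗮ.starProjection (b j) ∈ _
      rw [starProjection_orthogonal_val, starProjection_singleton]
      exact sub_mem (subset_span ⟨j, rfl⟩) (smul_mem _ _ (subset_span ⟨v, rfl⟩))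
    have hK : span ℝ (range fun j : ({v}ᶜ : Set ι) => K.starProjection (b j)) ≤ K := by
      rw [span_le]
      rintro _ ⟨j, rfl⟩
      exact K.starProjection_apply_mem _
    have := FiniteDimensional.span_of_finite ℝ (finite_range b)
    refine Submodule.finrank_lt_finrank_of_lt (hle.lt_of_ne fun h => hbv ?_)
    have : b v ∈ K := hK (h ▸ subset_span ⟨v, rfl⟩)
    simpa using inner_self_eq_zero.mp (mem_orthogonal_singleton_iff_inner_right.mp this)

theorem IsAcyclic.card_le_finrank_span_add_card_connectedComponent (hG : G.IsAcyclic)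
    (hb : G.IsFaithfulOrthogonalRep b) :
    Nat.card ι ≤ finrank ℝ (span ℝ (range b)) + Nat.card G.ConnectedComponent := by
  induction h : Nat.card ι generalizing ι with
  | zero => omega
  | succ n ih =>
    by_cases hbot : G = ⊥
    · rw [hbot, card_connectedComponent_bot]
      omega
    obtain ⟨v, hv⟩ := hG.exists_existsUnique_adj hbot
    obtain ⟨b', hb', hlt⟩ := hb.exists_induce_compl_singleton hv
    have hcard : Nat.card ({v}ᶜ : Set ι) = n := by
      rw [Nat.card_coe_set_eq, Set.ncard_compl, Set.ncard_singleton, h]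
      rfl
    have hind := ih (hG.induce _) hb' hcard
    have hcomp := card_connectedComponent_induce_le (G := G) (s := {v}ᶜ) (by
      rintro w hw a ha c hc
      obtain rfl : w = v := by simpa using hw
      exact hv.unique ha hc)
    omega

end

end SimpleGraph

namespace Matrix

variable {ι : Type*} [Fintype ι]

theorem rank_lt_rank_of_ker_lt {R m : Type*} [Field R] {M N : Matrix m ι R}
    (h : LinearMap.ker M.mulVecLin < LinearMap.ker N.mulVecLin) : N.rank < M.rank := by
  have hM := LinearMap.finrank_range_add_finrank_ker M.mulVecLin
  have hN := LinearMap.finrank_range_add_finrank_ker N.mulVecLin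
  have := Submodule.finrank_lt_finrank_of_lt h
  unfold rank
  omega

theorem IsHermitian.dotProduct_mulVec_comm {M : Matrix ι ι ℝ} (hM : M.IsHermitian)
    (u w : ι → ℝ) : u ⬝ᵥ M *ᵥ w = w ⬝ᵥ M *ᵥ u := by
  rw [dotProduct_mulVec, ← vecMul_transpose, ← conjTranspose_eq_transpose_of_trivial, hM.eq,
    dotProduct_comm]

theorem IsHermitian.exists_mulVec_eq [DecidableEq ι] {M : Matrix ι ι ℝ} (hM : M.IsHermitian)
    {y : ι → ℝ} (hy : ∀ z, M *ᵥ z = 0 → y ⬝ᵥ z = 0) : ∃ x, M *ᵥ x = y := by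
  have hT := isSymmetric_toEuclideanLin_iff.mpr hM
  have : WithLp.toLp 2 y ∈ LinearMap.range M.toEuclideanLin := by
    rw [← (LinearMap.range _).orthogonal_orthogonal, hT.orthogonal_range]
    intro z hz
    rw [LinearMap.mem_ker, toLpLin_apply, WithLp.toLp_eq_zero] at hz
    simpa [EuclideanSpace.inner_eq_star_dotProduct] using hy _ hz
  obtain ⟨x, hx⟩ := this
  exact ⟨WithLp.ofLp x, by simpa [toLpLin_apply] using congrArg WithLp.ofLp hx⟩

theorem PosSemidef.exists_gram_eq {A : Matrix ι ι ℝ} (hA : A.PosSemidef) :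
    ∃ b : ι → EuclideanSpace ℝ ι, gram ℝ b = A ∧ finrank ℝ (span ℝ (range b)) = A.rank := by
  classical
  obtain ⟨B, rfl⟩ := by
    open scoped MatrixOrder in exact CStarAlgebra.nonneg_iff_eq_star_mul_self.mp hA.nonneg
  refine ⟨fun i => WithLp.toLp 2 (B.col i), ?_, ?_⟩
  · ext i j
    simp [gram_apply, EuclideanSpace.inner_toLp_toLp, mul_apply, dotProduct, mul_comm]
  · have : range (fun i => WithLp.toLp 2 (B.col i)) =
        (WithLp.linearEquiv 2 ℝ (ι → ℝ)).symm.toLinearMap '' range B.col := by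
      rw [← range_comp]
      rfl
    rw [star_eq_conjTranspose, rank_conjTranspose_mul_self, rank_eq_finrank_span_cols, this,
      span_image, LinearEquiv.finrank_map_eq]

/-- Wedderburn's rank-one reduction of `M` along `x`. -/
noncomputable def wedderburnReduction (M : Matrix ι ι ℝ) (x : ι → ℝ) : Matrix ι ι ℝ :=
  M - (x ⬝ᵥ M *ᵥ x)⁻¹ • vecMulVec (M *ᵥ x) (M *ᵥ x)

variable {M : Matrix ι ι ℝ} {x : ι → ℝ}

theorem wedderburnReduction_mulVec (z : ι → ℝ) :
    M.wedderburnReduction x *ᵥ z = M *ᵥ z - ((x ⬝ᵥ M *ᵥ x)⁻¹ * (M *ᵥ x ⬝ᵥ z)) • M *ᵥ x := by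
  simp [wedderburnReduction, sub_mulVec, smul_mulVec, vecMulVec_mulVec, smul_smul]

theorem PosSemidef.wedderburnReduction (hM : M.PosSemidef) (x : ι → ℝ) :
    (M.wedderburnReduction x).PosSemidef := by
  have hsymm := hM.isHermitian.dotProduct_mulVec_comm
  refine .of_dotProduct_mulVec_nonneg ?_ fun z => ?_
  · refine hM.isHermitian.sub (IsHermitian.smul ?_ (IsSelfAdjoint.all _))
    simpa using (posSemidef_vecMulVec_self_star (M *ᵥ x)).isHermitian
  set c := x ⬝ᵥ M *ᵥ x
  set s := x ⬝ᵥ M *ᵥ z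
  have hc : 0 ≤ c := by simpa using hM.dotProduct_mulVec_nonneg x
  have hz : 0 ≤ z ⬝ᵥ M *ᵥ z := by simpa using hM.dotProduct_mulVec_nonneg z
  have hquad : z ⬝ᵥ M.wedderburnReduction x *ᵥ z = z ⬝ᵥ M *ᵥ z - c⁻¹ * s ^ 2 := by
    rw [wedderburnReduction_mulVec, dotProduct_sub, dotProduct_smul, smul_eq_mul,
      dotProduct_comm (M *ᵥ x), hsymm z x]
    ring
  -- Cauchy–Schwarz `s ^ 2 ≤ c * (z ⬝ᵥ M *ᵥ z)` for the form of `M`, by completing the square.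
  have hsq : (c • z - s • x) ⬝ᵥ M *ᵥ (c • z - s • x) = c * (c * (z ⬝ᵥ M *ᵥ z) - s ^ 2) := by
    simp only [mulVec_sub, mulVec_smul, dotProduct_sub, sub_dotProduct, dotProduct_smul,
      smul_dotProduct, smul_eq_mul]
    rw [hsymm z x]
    ring
  rw [star_trivial, hquad]
  rcases hc.eq_or_lt with hc0 | hcpos
  · simp [← hc0, hz]
  have h := hM.dotProduct_mulVec_nonneg (c • z - s • x)
  rw [star_trivial, hsq] at h
  have h' := nonneg_of_mul_nonneg_right h hcpos
  calc 0 ≤ c⁻¹ * (c * (z ⬝ᵥ M *ᵥ z) - s ^ 2) := by positivity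
    _ = _ := by field_simp

theorem PosSemidef.rank_wedderburnReduction_lt (hM : M.PosSemidef) (hx : M *ᵥ x ≠ 0) :
    (M.wedderburnReduction x).rank < M.rank := by
  have hc : x ⬝ᵥ M *ᵥ x ≠ 0 := by simpa using (hM.dotProduct_mulVec_zero_iff x).not.mpr hx
  refine rank_lt_rank_of_ker_lt (lt_of_le_of_ne (fun z hz => ?_) fun h => hx ?_)
  · rw [LinearMap.mem_ker, mulVecLin_apply] at hz ⊢
    rw [wedderburnReduction_mulVec, hz, dotProduct_comm (M *ᵥ x),
      hM.isHermitian.dotProduct_mulVec_comm z x, hz]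
    simp
  · have : x ∈ LinearMap.ker (M.wedderburnReduction x).mulVecLin := by
      rw [LinearMap.mem_ker, mulVecLin_apply, wedderburnReduction_mulVec,
        dotProduct_comm (M *ᵥ x), inv_mul_cancel₀ hc, one_smul, sub_self]
    rwa [← h, LinearMap.mem_ker, mulVecLin_apply] at this

end Matrix

namespace SimpleGraph

variable {V : Type*} [Fintype V] [DecidableEq V] (G : SimpleGraph V) [DecidableRel G.Adj]

theorem lapMatrix_apply_ne_zero_iff {i j : V} (hij : i ≠ j) :
    G.lapMatrix ℝ i j ≠ 0 ↔ G.Adj i j := by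
  by_cases h : G.Adj i j <;> simp [lapMatrix, degMatrix, diagonal_apply_ne _ hij, h]

theorem rank_lapMatrix_add_card_connectedComponent :
    (G.lapMatrix ℝ).rank + Nat.card G.ConnectedComponent = Fintype.card V := by
  rw [Nat.card_eq_fintype_card, card_connectedComponent_eq_finrank_ker_toLin'_lapMatrix,
    toLin'_apply', rank, LinearMap.finrank_range_add_finrank_ker, finrank_fintype_fun_eq_card]

end SimpleGraph

section

variable {n : ℕ} {G : SimpleGraph (Fin n)}

theorem smat_lapMatrix [DecidableRel G.Adj] : SMat G (G.lapMatrix ℝ) :=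
  ⟨isSymm_lapMatrix ℝ G, fun _ _ hij => G.lapMatrix_apply_ne_zero_iff hij⟩

theorem mrPlus_le {A : Matrix (Fin n) (Fin n) ℝ} (hA : SMat G A) (hpsd : A.PosSemidef) :
    mrPlus G ≤ A.rank :=
  Nat.sInf_le ⟨A, hA, hpsd, rfl⟩

theorem SimpleGraph.IsAcyclic.card_sub_card_connectedComponent_le_rank (hG : G.IsAcyclic)
    {A : Matrix (Fin n) (Fin n) ℝ} (hA : SMat G A) (hpsd : A.PosSemidef) :
    n - Nat.card G.ConnectedComponent ≤ A.rank := by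
  obtain ⟨b, hgram, hrank⟩ := hpsd.exists_gram_eq
  have hb : G.IsFaithfulOrthogonalRep b := fun i j hij => by
    rw [← hA.2 i j hij, ← hgram, gram_apply]
  have := hG.card_le_finrank_span_add_card_connectedComponent hb
  rw [Nat.card_fin] at this
  omega

theorem smat_lapMatrix_deleteEdges_sub_smul_vecMulVec [DecidableRel G.Adj] {p r : Fin n}
    (hpr : G.Adj p r) {t : ℝ} (ht : t ≠ 0) :
    SMat G ((G.deleteEdges {s(p, r)}).lapMatrix ℝ -
      t • vecMulVec (Pi.single p 1 - Pi.single r 1) (Pi.single p 1 - Pi.single r 1)) := by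
  refine ⟨(isSymm_lapMatrix ℝ _).sub (IsSymm.smul (transpose_vecMulVec _ _) t), fun i j hij => ?_⟩
  simp only [Matrix.sub_apply, Matrix.smul_apply, vecMulVec_apply, Pi.sub_apply, Pi.single_apply,
    smul_eq_mul]
  by_cases he : s(i, j) = s(p, r)
  · have hL : (G.deleteEdges {s(p, r)}).lapMatrix ℝ i j = 0 := by
      rw [← not_ne_iff, lapMatrix_apply_ne_zero_iff _ hij, deleteEdges_adj]
      simp [he]
    rw [hL, ← mem_edgeSet, he]
    rcases Sym2.eq_iff.mp he with ⟨rfl, rfl⟩ | ⟨rfl, rfl⟩ <;> simp [hij, hij.symm, hpr, ht]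
  · have hy : ((if i = p then 1 else 0) - if i = r then 1 else 0) *
        ((if j = p then 1 else 0) - if j = r then (1 : ℝ) else 0) = 0 := by
      grind
    rw [hy, mul_zero, sub_zero, lapMatrix_apply_ne_zero_iff _ hij, deleteEdges_adj]
    simp [he]

theorem exists_smat_posSemidef_rank_lt_of_not_isAcyclic (hG : ¬G.IsAcyclic) :
    ∃ A, SMat G A ∧ A.PosSemidef ∧ A.rank < n - Nat.card G.ConnectedComponent := by
  classical
  obtain ⟨p, r, hpr, hnb⟩ : ∃ p r, G.Adj p r ∧ ¬G.IsBridge s(p, r) := by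
    simpa [isAcyclic_iff_forall_adj_isBridge] using hG
  set G₀ := G.deleteEdges {s(p, r)}
  set y : Fin n → ℝ := Pi.single p 1 - Pi.single r 1
  obtain ⟨x, hx⟩ : ∃ x, G₀.lapMatrix ℝ *ᵥ x = y :=
    (isHermitian_lapMatrix ℝ G₀).exists_mulVec_eq fun z hz => by
      have := (lapMatrix_mulVec_eq_zero_iff_forall_reachable G₀).mp hz p r (not_not.mp hnb)
      simp [y, sub_dotProduct, this]
  have hy : y ≠ 0 := fun h => by simpa [y, hpr.ne] using congrFun h p
  have hL := posSemidef_lapMatrix ℝ G₀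
  have hc : x ⬝ᵥ y ≠ 0 := by
    simpa [hx] using (hL.dotProduct_mulVec_zero_iff x).not.mpr (hx ▸ hy)
  refine ⟨(G₀.lapMatrix ℝ).wedderburnReduction x, ?_, hL.wedderburnReduction x, ?_⟩
  · rw [wedderburnReduction, hx]
    exact smat_lapMatrix_deleteEdges_sub_smul_vecMulVec hpr (inv_ne_zero hc)
  · have h₁ := hL.rank_wedderburnReduction_lt (hx ▸ hy)
    have h₂ := G₀.rank_lapMatrix_add_card_connectedComponent
    have h₃ : Nat.card G.ConnectedComponent ≤ Nat.card G₀.ConnectedComponent :=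
      ConnectedComponent.card_le_card_of_le (G.deleteEdges_le _)
    rw [Fintype.card_fin] at h₂
    omega

end

/-- mr₊(G) = n − (number of components) if and only if G is a forest. -/
theorem stmt9 {n : ℕ} (G : SimpleGraph (Fin n)) (ℓ : ℕ)
    (hl : ℓ = Nat.card G.ConnectedComponent) :
    mrPlus G = n - ℓ ↔ G.IsAcyclic := by
  classical
  subst hl
  have hlap : mrPlus G ≤ n - Nat.card G.ConnectedComponent := by
    have := G.rank_lapMatrix_add_card_connectedComponent
    have := mrPlus_le smat_lapMatrix (posSemidef_lapMatrix ℝ G)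
    rw [Fintype.card_fin] at *
    omega
  constructor
  · intro h
    by_contra hG
    obtain ⟨A, hA, hpsd, hlt⟩ := exists_smat_posSemidef_rank_lt_of_not_isAcyclic hG
    have := mrPlus_le hA hpsd
    omega
  · intro hG
    refine hlap.antisymm (le_csInf ⟨_, _, smat_lapMatrix, posSemidef_lapMatrix ℝ G, rfl⟩ ?_)
    rintro _ ⟨A, hA, hpsd, rfl⟩
    exact hG.card_sub_card_connectedComponent_le_rank hA hpsd
end
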